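/- Let q : ℝ → ℝ be continuous and 1-periodic, let λ, k ∈ ℝ, and let ψ : ℝ → ℝ be twice continuously differentiable, 1-periodic, positive on ℝ, satisfying ψ'' + 2λψ' + (q + λ²)ψ = k ψ on ℝ. Then k = ∫₀¹ (ψ'(x)/ψ(x))² dx + λ² + ∫₀¹ q(x) dx. In particular k ≥ λ² + ∫₀¹ q, with equality if and only if ψ is constant. -/

import Mathlib

/-!
With `F = ψ'/ψ` the eigenvalue equation becomes the Riccati equation
`F' = k - λ² - q - 2λF - F²`. Both `F = (log ψ)'` and `F'` are derivatives of periodic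
functions, so they integrate to zero over a period; integrating the Riccati equation leaves
`k = ∫ F² + λ² + ∫ q`. Equality `k = λ² + ∫ q` forces the continuous function `F²` to vanish,
i.e. `ψ' = 0`.
-/

open Function intervalIntegral

theorem Function.Periodic.deriv {𝕜 E : Type*} [NontriviallyNormedField 𝕜] [NormedAddCommGroup E]
    [NormedSpace 𝕜 E] {f : 𝕜 → E} {c : 𝕜} (h : Periodic f c) : Periodic (_root_.deriv f) c :=
  fun x => by rw [← deriv_comp_add_const, h.funext]

theorem Function.Periodic.integral_eq_zero_of_hasDerivAt {E : Type*} [NormedAddCommGroup E]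
    [NormedSpace ℝ E] [CompleteSpace E] {g g' : ℝ → E} {T a : ℝ} (hg : Periodic g T)
    (hderiv : ∀ x, HasDerivAt g (g' x) x)
    (hint : IntervalIntegrable g' MeasureTheory.volume a (a + T)) :
    ∫ x in a..a + T, g' x = 0 := by
  rw [integral_eq_sub_of_hasDerivAt (fun x _ => hderiv x) hint, hg a, sub_self]

theorem Function.Periodic.eq_zero_of_integral_eq_zero_of_nonneg {f : ℝ → ℝ} {T : ℝ}
    (hper : Periodic f T) (hT : 0 < T) (hf : Continuous f) (hf0 : ∀ x, 0 ≤ f x)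
    (hint : ∫ x in (0 : ℝ)..T, f x = 0) (x : ℝ) : f x = 0 := by
  obtain ⟨y, hy, hxy⟩ := hper.exists_mem_Ico₀ hT x
  rw [hxy]
  by_contra hne
  have hpos := integral_pos hT hf.continuousOn (fun x _ => hf0 x)
    ⟨y, Set.Ico_subset_Icc_self hy, (hf0 y).lt_of_ne' hne⟩
  exact hpos.ne' hint

theorem Function.Periodic.logDeriv {𝕜 : Type*} [NontriviallyNormedField 𝕜] {f : 𝕜 → 𝕜} {c : 𝕜}
    (h : Periodic f c) : Periodic (_root_.logDeriv f) c :=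
  h.deriv.div h

theorem hasDerivAt_logDeriv {𝕜 : Type*} [NontriviallyNormedField 𝕜] {ψ : 𝕜 → 𝕜} {x : 𝕜}
    (hψ : DifferentiableAt 𝕜 ψ x) (hψ' : DifferentiableAt 𝕜 (deriv ψ) x) (hx : ψ x ≠ 0) :
    HasDerivAt (logDeriv ψ) (deriv (deriv ψ) x / ψ x - logDeriv ψ x ^ 2) x := by
  refine (hψ'.hasDerivAt.div hψ.hasDerivAt hx).congr_deriv ?_
  rw [logDeriv_apply]
  field_simp

section LogDeriv

variable {ψ : ℝ → ℝ}

theorem ContDiff.continuous_logDeriv (hψ : ContDiff ℝ 1 ψ) (hψ0 : ∀ x, ψ x ≠ 0) :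
    Continuous (logDeriv ψ) :=
  (hψ.continuous_deriv le_rfl).div hψ.continuous hψ0

theorem integral_logDeriv_eq_zero_of_periodic {T : ℝ} (hψ : ContDiff ℝ 1 ψ)
    (hper : Periodic ψ T) (hψ0 : ∀ x, ψ x ≠ 0) : ∫ x in (0 : ℝ)..T, logDeriv ψ x = 0 := by
  have hd : Differentiable ℝ ψ := hψ.differentiable one_ne_zero
  simpa [logDeriv_apply] using (hper.comp Real.log).integral_eq_zero_of_hasDerivAt (a := 0)
    (fun x => (hd x).hasDerivAt.log (hψ0 x))
    ((hψ.continuous_logDeriv hψ0).intervalIntegrable _ _)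

theorem integral_logDeriv_sq_eq_zero_iff {T : ℝ} (hT : 0 < T) (hψ : ContDiff ℝ 1 ψ)
    (hper : Periodic ψ T) (hψ0 : ∀ x, ψ x ≠ 0) :
    ∫ x in (0 : ℝ)..T, logDeriv ψ x ^ 2 = 0 ↔ ∃ c, ∀ x, ψ x = c := by
  constructor
  · intro hint
    have hderiv (x : ℝ) : deriv ψ x = 0 := by
      have hsq := Periodic.eq_zero_of_integral_eq_zero_of_nonneg
        (f := fun x => logDeriv ψ x ^ 2) (hper.logDeriv.comp (· ^ 2))
        hT ((hψ.continuous_logDeriv hψ0).pow 2) (fun x => sq_nonneg _) hint x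
      simpa [logDeriv_apply, hψ0 x] using hsq
    exact ⟨ψ 0, fun x => is_const_of_deriv_eq_zero (hψ.differentiable one_ne_zero) hderiv x 0⟩
  · rintro ⟨c, hc⟩
    simp [logDeriv_apply, funext hc]

theorem eigenvalue_eq_integral_logDeriv_sq {q : ℝ → ℝ} {lam k : ℝ} (hq : Continuous q)
    (hψ : ContDiff ℝ 2 ψ) (hper : Periodic ψ 1) (hψ0 : ∀ x, ψ x ≠ 0)
    (heq : ∀ x, deriv (deriv ψ) x + 2 * lam * deriv ψ x + (q x + lam ^ 2) * ψ x = k * ψ x) :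
    k = (∫ x in (0 : ℝ)..1, logDeriv ψ x ^ 2) + lam ^ 2 + ∫ x in (0 : ℝ)..1, q x := by
  have hψ1 : ContDiff ℝ 1 ψ := hψ.of_le one_le_two
  have hψ'1 : ContDiff ℝ 1 (deriv ψ) := (contDiff_succ_iff_deriv.mp hψ).2.2
  have hF := hψ1.continuous_logDeriv hψ0
  have riccati (x : ℝ) : HasDerivAt (logDeriv ψ)
      (k - lam ^ 2 - q x - 2 * lam * logDeriv ψ x - logDeriv ψ x ^ 2) x := by
    refine (hasDerivAt_logDeriv (hψ1.differentiable one_ne_zero x)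
      (hψ'1.differentiable one_ne_zero x) (hψ0 x)).congr_deriv ?_
    have hx := hψ0 x
    have hψ'' : deriv (deriv ψ) x / ψ x = k - lam ^ 2 - q x - 2 * lam * (deriv ψ x / ψ x) := by
      field_simp
      linear_combination heq x
    rw [logDeriv_apply, hψ'']
  have h0 := hper.logDeriv.integral_eq_zero_of_hasDerivAt (a := 0) riccati
    (Continuous.intervalIntegrable (by fun_prop) _ _)
  rw [zero_add, integral_sub, integral_sub, integral_sub, integral_const_mul, integral_const,
    integral_logDeriv_eq_zero_of_periodic hψ1 hper hψ0] at h0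
  · simp only [sub_zero, smul_eq_mul, mul_zero] at h0
    linarith
  all_goals exact Continuous.intervalIntegrable (by fun_prop) _ _

end LogDeriv

theorem stmt10_general (q : ℝ → ℝ) (lam k : ℝ)
    (hq : Continuous q)
    (ψ : ℝ → ℝ) (hψ : ContDiff ℝ 2 ψ) (hψper : Function.Periodic ψ 1)
    (hψpos : ∀ x, 0 < ψ x)
    (heq : ∀ x : ℝ,
      deriv (deriv ψ) x + 2 * lam * deriv ψ x + (q x + lam ^ 2) * ψ x = k * ψ x) :
    k = (∫ x in (0:ℝ)..1, (deriv ψ x / ψ x) ^ 2) + lam ^ 2 + ∫ x in (0:ℝ)..1, q x ∧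
    lam ^ 2 + (∫ x in (0:ℝ)..1, q x) ≤ k ∧
    (k = lam ^ 2 + (∫ x in (0:ℝ)..1, q x) ↔ ∃ c : ℝ, ∀ x, ψ x = c) := by
  have hψ0 (x : ℝ) : ψ x ≠ 0 := (hψpos x).ne'
  have hkey := eigenvalue_eq_integral_logDeriv_sq hq hψ hψper hψ0 heq
  have hconst := integral_logDeriv_sq_eq_zero_iff one_pos (hψ.of_le one_le_two) hψper hψ0
  simp only [logDeriv_apply] at hkey hconst
  have hsq_nonneg : 0 ≤ ∫ x in (0:ℝ)..1, (deriv ψ x / ψ x) ^ 2 :=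
    integral_nonneg zero_le_one fun x _ => sq_nonneg _
  refine ⟨hkey, by linarith, ?_⟩
  rw [← hconst]
  constructor <;> intro h <;> linarith

/-- integrating the eigenvalue equation against `1/ψ` over a period gives
`k = ∫₀¹ (ψ'/ψ)² + λ² + ∫₀¹ q`; in particular `k ≥ λ² + ∫₀¹ q`, with equality iff `ψ` is
constant. -/
theorem stmt10 (q : ℝ → ℝ) (lam k : ℝ)
    (hq : Continuous q) (hqper : Function.Periodic q 1)
    (ψ : ℝ → ℝ) (hψ : ContDiff ℝ 2 ψ) (hψper : Function.Periodic ψ 1)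
    (hψpos : ∀ x, 0 < ψ x)
    (heq : ∀ x : ℝ,
      deriv (deriv ψ) x + 2 * lam * deriv ψ x + (q x + lam ^ 2) * ψ x = k * ψ x) :
    k = (∫ x in (0:ℝ)..1, (deriv ψ x / ψ x) ^ 2) + lam ^ 2 + ∫ x in (0:ℝ)..1, q x ∧
    lam ^ 2 + (∫ x in (0:ℝ)..1, q x) ≤ k ∧
    (k = lam ^ 2 + (∫ x in (0:ℝ)..1, q x) ↔ ∃ c : ℝ, ∀ x, ψ x = c) :=
  stmt10_general q lam k hq ψ hψ hψper hψpos heq
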